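/- arXiv:2108.00234 — 5 statements merged into one kernel-verified Lean document; each statement's English description precedes it below -/
import Mathlib

section
/- For every u > 0 and r ∈ ℝ, the function M satisfies the partial differential equation −∂_u M(u,r) + a(b−r)·∂_r M(u,r) + (δ²/2)·∂_{rr} M(u,r) − r·M(u,r) = 0. -/
open Real

/-- The function `M(u,r)` from the paper:
`M(u,r) = exp(−b̃u + ((b̃−r)/a)(1−e^{−au}) − (δ²/(4a³))(1−e^{−au})²)`
where `b̃ = b − δ²/(2a²)`. -/
noncomputable def M (a δ b u r : ℝ) : ℝ :=
  Real.exp (-(b - δ^2/(2*a^2))*u + ((b - δ^2/(2*a^2)) - r)/a * (1 - Real.exp (-(a*u)))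
    - δ^2/(4*a^3) * (1 - Real.exp (-(a*u)))^2)

/-!
`M` is exponential-affine in `r`: `M(u,r) = exp(A(u) − r B(u))` with `B(u) = (1 − e^{−au})/a`
and `A(u) = −b̃u + b̃B(u) − δ²B(u)²/(4a)`. For such a function the left-hand side of the PDE is
`M · ((−A' − abB + δ²B²/2) + r(B' + aB − 1))`, so the PDE reduces to the two Riccati equations
`B' = 1 − aB` and `A' = −abB + δ²B²/2`, which these `A`, `B` satisfy.
-/

section AffineExponent

variable {a b δ : ℝ} {A B : ℝ → ℝ}

lemma hasDerivAt_exp_sub_mul (x y r : ℝ) :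
    HasDerivAt (fun r' => exp (x - r' * y)) (-y * exp (x - r * y)) r := by
  simpa [mul_comm] using ((hasDerivAt_id r).mul_const y).const_sub x |>.exp

theorem exp_affine_solves_pde {u : ℝ}
    (hA : HasDerivAt A (-a * b * B u + δ ^ 2 / 2 * B u ^ 2) u)
    (hB : HasDerivAt B (1 - a * B u) u) (r : ℝ) :
    -(deriv (fun u' => exp (A u' - r * B u')) u)
      + a * (b - r) * deriv (fun r' => exp (A u - r' * B u)) r
      + δ ^ 2 / 2 * deriv (deriv (fun r' => exp (A u - r' * B u))) r
      - r * exp (A u - r * B u) = 0 := by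
  have h_u : HasDerivAt (fun u' => exp (A u' - r * B u'))
      (exp (A u - r * B u) * (-a * b * B u + δ ^ 2 / 2 * B u ^ 2 - r * (1 - a * B u))) u :=
    (hA.sub (hB.const_mul r)).exp
  have h_r : deriv (fun r' => exp (A u - r' * B u)) = fun r' => -B u * exp (A u - r' * B u) :=
    funext fun r' => (hasDerivAt_exp_sub_mul _ _ r').deriv
  have h_rr := (hasDerivAt_exp_sub_mul (A u) (B u) r).const_mul (-B u)
  rw [h_u.deriv, h_r, h_rr.deriv]
  ring

end AffineExponent

section Vasicek

variable {a : ℝ} (δ b : ℝ)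

noncomputable def vasicekB (a u : ℝ) : ℝ := (1 - exp (-(a * u))) / a

noncomputable def vasicekA (a δ b u : ℝ) : ℝ :=
  -(b - δ ^ 2 / (2 * a ^ 2)) * u + (b - δ ^ 2 / (2 * a ^ 2)) * vasicekB a u
    - δ ^ 2 / (4 * a) * vasicekB a u ^ 2

lemma hasDerivAt_vasicekB (ha : a ≠ 0) (u : ℝ) :
    HasDerivAt (vasicekB a) (1 - a * vasicekB a u) u := by
  have h : HasDerivAt (vasicekB a) (-(exp (-(a * u)) * -(a * 1)) / a) u :=
    (((hasDerivAt_id u).const_mul a).neg.exp.const_sub 1).div_const a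
  refine h.congr_deriv ?_
  rw [vasicekB]
  field_simp
  ring

lemma hasDerivAt_vasicekA (ha : a ≠ 0) (u : ℝ) :
    HasDerivAt (vasicekA a δ b)
      (-a * b * vasicekB a u + δ ^ 2 / 2 * vasicekB a u ^ 2) u := by
  have hB := hasDerivAt_vasicekB ha u
  set c := b - δ ^ 2 / (2 * a ^ 2)
  have h : HasDerivAt (vasicekA a δ b) (-c * 1 + c * (1 - a * vasicekB a u)
      - δ ^ 2 / (4 * a) * (2 * vasicekB a u ^ (2 - 1) * (1 - a * vasicekB a u))) u :=
    (((hasDerivAt_id u).const_mul (-c)).add (hB.const_mul c)).sub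
      ((hB.pow 2).const_mul (δ ^ 2 / (4 * a)))
  refine h.congr_deriv ?_
  simp only [c]
  field_simp
  ring

lemma M_eq_exp_vasicek (ha : a ≠ 0) (u r : ℝ) :
    M a δ b u r = exp (vasicekA a δ b u - r * vasicekB a u) := by
  rw [M, vasicekA, vasicekB]
  congr 1
  field_simp
  ring

end Vasicek

theorem M_solves_pde_general (a δ b : ℝ) (ha : 0 < a) :
    ∀ u > (0:ℝ), ∀ r : ℝ,
      -(deriv (fun u' => M a δ b u' r) u)
        + a*(b - r) * deriv (fun r' => M a δ b u r') r
        + δ^2/2 * deriv (deriv (fun r' => M a δ b u r')) r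
        - r * M a δ b u r = 0 := by
  intro u _ r
  simp only [M_eq_exp_vasicek δ b ha.ne']
  exact exp_affine_solves_pde (hasDerivAt_vasicekA δ b ha.ne' u) (hasDerivAt_vasicekB ha.ne' u) r

/-- `M` satisfies
`−∂_u M(u,r) + a(b−r)·∂_r M(u,r) + (δ²/2)·∂_{rr} M(u,r) − r·M(u,r) = 0`
for every `u > 0`, `r ∈ ℝ`. -/
theorem M_solves_pde (a δ b : ℝ) (ha : 0 < a) (hδ : 0 < δ) :
    ∀ u > (0:ℝ), ∀ r : ℝ,
      -(deriv (fun u' => M a δ b u' r) u)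
        + a*(b - r) * deriv (fun r' => M a δ b u r') r
        + δ^2/2 * deriv (deriv (fun r' => M a δ b u r')) r
        - r * M a δ b u r = 0 :=
  M_solves_pde_general a δ b ha
end

section
/- Assume b̃ > 0. Then for every fixed r ≥ 0, the function u ↦ M(u,r) is strictly decreasing on [0,∞); in particular M(u,r) < M(0,r) = 1 for every u > 0. -/
open Real

/-! With `e = exp (-a u) ∈ (0, 1)` for `u > 0`, the exponent of `M` has derivative
`-b̃ (1 - e) - r e - (δ²/(2a²)) (1 - e) e`, a sum of nonpositive terms of which the first is
negative. So the exponent, and hence `M`, is strictly decreasing in `u`. -/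

theorem hasDerivAt_one_sub_exp_neg_mul (a u : ℝ) :
    HasDerivAt (fun u => 1 - exp (-(a*u))) (a * exp (-(a*u))) u := by
  have h : HasDerivAt (fun u => -(a*u)) (-a) u := by
    simpa using ((hasDerivAt_id' u).const_mul a).fun_neg
  exact (h.exp.const_sub 1).congr_deriv (by ring)

namespace M

variable (a δ b r : ℝ)

noncomputable def exponent (u : ℝ) : ℝ :=
  -(b - δ^2/(2*a^2))*u + ((b - δ^2/(2*a^2)) - r)/a * (1 - exp (-(a*u)))
    - δ^2/(4*a^3) * (1 - exp (-(a*u)))^2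

theorem eq_exp_exponent (u : ℝ) : M a δ b u r = exp (exponent a δ b r u) := rfl

theorem at_zero : M a δ b 0 r = 1 := by
  simp [M]

variable {a}

theorem hasDerivAt_exponent (ha : a ≠ 0) (u : ℝ) :
    HasDerivAt (exponent a δ b r)
      (-(b - δ^2/(2*a^2)) * (1 - exp (-(a*u))) - r * exp (-(a*u))
        - δ^2/(2*a^2) * ((1 - exp (-(a*u))) * exp (-(a*u)))) u := by
  have hx := hasDerivAt_one_sub_exp_neg_mul a u
  refine ((((hasDerivAt_id' u).const_mul (-(b - δ^2/(2*a^2)))).fun_add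
    (hx.const_mul (((b - δ^2/(2*a^2)) - r)/a))).fun_sub
      ((hx.fun_pow 2).const_mul (δ^2/(4*a^3)))).congr_deriv ?_
  field_simp
  ring

variable {b r}

theorem exponent_strictAntiOn (ha : 0 < a) (hb : 0 < b - δ^2/(2*a^2)) (hr : 0 ≤ r) :
    StrictAntiOn (exponent a δ b r) (Set.Ici 0) := by
  refine strictAntiOn_of_deriv_neg (convex_Ici 0) (by unfold exponent; fun_prop) fun u hu => ?_
  rw [interior_Ici] at hu
  rw [(hasDerivAt_exponent δ b r ha.ne' u).deriv]
  have he_pos : 0 < exp (-(a*u)) := exp_pos _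
  have he_lt_one : exp (-(a*u)) < 1 := 
    exp_lt_one_iff.2 (neg_neg_of_pos (mul_pos ha hu))
  have h₁ : 0 < (b - δ^2/(2*a^2)) * (1 - exp (-(a*u))) := mul_pos hb (by linarith)
  have h₂ : 0 ≤ r * exp (-(a*u)) := mul_nonneg hr he_pos.le
  have h₃ : 0 ≤ δ^2/(2*a^2) * ((1 - exp (-(a*u))) * exp (-(a*u))) := by
    have : 0 < 1 - exp (-(a*u)) := by linarith
    positivity
  linarith

theorem strictAntiOn (ha : 0 < a) (hb : 0 < b - δ^2/(2*a^2)) (hr : 0 ≤ r) :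
    StrictAntiOn (fun u => M a δ b u r) (Set.Ici 0) := by
  simp only [eq_exp_exponent]
  exact exp_strictMono.comp_strictAntiOn (exponent_strictAntiOn δ ha hb hr)

end M

theorem M_strictAnti_in_u_general (a δ b : ℝ) (ha : 0 < a)
    (hb : 0 < b - δ^2/(2*a^2)) :
    ∀ r ≥ (0:ℝ),
      (∀ u₁ u₂ : ℝ, 0 ≤ u₁ → u₁ < u₂ → M a δ b u₂ r < M a δ b u₁ r) ∧
      M a δ b 0 r = 1 ∧
      (∀ u > (0:ℝ), M a δ b u r < 1) := by
  intro r hr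
  have hanti := M.strictAntiOn δ ha hb hr
  have hdecr : ∀ u₁ u₂ : ℝ, 0 ≤ u₁ → u₁ < u₂ → M a δ b u₂ r < M a δ b u₁ r :=
    fun u₁ u₂ h₁ h₁₂ => hanti h₁ (h₁.trans h₁₂.le) h₁₂
  refine ⟨hdecr, M.at_zero a δ b r, fun u hu => ?_⟩
  simpa only [M.at_zero] using hdecr 0 u le_rfl hu

/-- if `b̃ = b − δ²/(2a²) > 0`, then for every fixed `r ≥ 0` the map
`u ↦ M(u,r)` is strictly decreasing on `[0,∞)`; in particular
`M(u,r) < M(0,r) = 1` for every `u > 0`. -/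
theorem M_strictAnti_in_u (a δ b : ℝ) (ha : 0 < a) (hδ : 0 < δ)
    (hb : 0 < b - δ^2/(2*a^2)) :
    ∀ r ≥ (0:ℝ),
      (∀ u₁ u₂ : ℝ, 0 ≤ u₁ → u₁ < u₂ → M a δ b u₂ r < M a δ b u₁ r) ∧
      M a δ b 0 r = 1 ∧
      (∀ u > (0:ℝ), M a δ b u r < 1) :=
  M_strictAnti_in_u_general a δ b ha hb
end

section
/- For every t ∈ [0,T) and r ∈ ℝ with r ≠ α(t), the following limit holds: lim_{u→0⁺} ∫_{α(t+u)}^{∞} φ(z,u,r)·(1 − M(T−t−u, z)) dz = 1 − M(T−t, r) if r > α(t), and the limit equals 0 if r < α(t). -/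
open Real Filter MeasureTheory

/-- The separating curve `α(t)`. -/
noncomputable def alphaCurve (a δ b T t : ℝ) : ℝ :=
  (b - δ^2/(2*a^2)) * (1 - a*(T - t)/(1 - Real.exp (-(a*(T - t)))))
    - δ^2/(4*a^2) * (1 - Real.exp (-(a*(T - t))))

/-- The Gaussian kernel `φ(z,u,r)`. -/
noncomputable def phiKer (a δ b z u r : ℝ) : ℝ :=
  (Real.sqrt (2*Real.pi*(δ^2/(2*a))*(1 - Real.exp (-(2*a*u)))))⁻¹ *
    Real.exp (-(z - r*Real.exp (-(a*u)) - b*(1 - Real.exp (-(a*u)))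
      + δ^2/(2*a^2)*(1 - Real.exp (-(a*u)))^2)^2
      / (2*(δ^2/(2*a))*(1 - Real.exp (-(2*a*u)))))

/-!
For `u > 0` the kernel `φ(·, u, r)` is the density of a Gaussian whose mean tends to `r` and whose
variance tends to `0` as `u → 0⁺`. Writing that Gaussian as an affine image `m + √v X` of a standard
normal `X`, the integrand becomes `1{m + √v X > α(t+u)} (1 - M(T-t-u, m + √v X))`. Since `r ≠ α(t)`,
it converges pointwise to `1{r > α(t)} (1 - M(T-t, r))`, and because `1 - M` grows at most
exponentially in `z` it is dominated by `C e^{K|X|}`, which is integrable against the Gaussian.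
Dominated convergence gives the limit.
-/

open ProbabilityTheory Set Topology
open scoped NNReal

lemma gaussianReal_eq_map_standard (m : ℝ) (v : ℝ≥0) :
    gaussianReal m v = (gaussianReal 0 1).map (fun x => m + √(v : ℝ) * x) := by
  have hcomp : (fun x => m + √(v : ℝ) * x) = (· + m) ∘ (√(v : ℝ) * ·) := by
    ext; simp [add_comm]
  rw [hcomp, ← Measure.map_map (by fun_prop) (by fun_prop), gaussianReal_map_const_mul,
    gaussianReal_map_add_const]
  congr 1
  · simp
  · ext; simp

lemma integral_gaussianReal_eq_integral_standard {m : ℝ} {v : ℝ≥0} {f : ℝ → ℝ}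
    (hf : AEStronglyMeasurable f (gaussianReal m v)) :
    ∫ z, f z ∂gaussianReal m v = ∫ x, f (m + √(v : ℝ) * x) ∂gaussianReal 0 1 := by
  rw [gaussianReal_eq_map_standard] at hf ⊢
  exact integral_map (by fun_prop) hf

lemma tendsto_indicator_Ioi_of_ne {ι : Type*} {l : Filter ι} {z c : ι → ℝ} {f : ι → ℝ → ℝ}
    {z₀ c₀ y : ℝ} (hz : Tendsto z l (𝓝 z₀)) (hc : Tendsto c l (𝓝 c₀)) (hzc : z₀ ≠ c₀)
    (hf : Tendsto (fun u => f u (z u)) l (𝓝 y)) :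
    Tendsto (fun u => (Ioi (c u)).indicator (f u) (z u)) l (𝓝 (if c₀ < z₀ then y else 0)) := by
  split_ifs with h
  · refine hf.congr' ?_
    filter_upwards [hc.eventually_lt hz h] with u hu
    exact (indicator_of_mem hu _).symm
  · refine tendsto_const_nhds.congr' ?_
    filter_upwards [hz.eventually_lt hc (lt_of_le_of_ne (not_lt.mp h) hzc)] with u hu
    exact (indicator_of_notMem (not_lt.mpr hu.le) _).symm

theorem tendsto_setIntegral_Ioi_gaussianReal {ι : Type*} {l : Filter ι} [l.IsCountablyGenerated]
    {m c : ι → ℝ} {v : ι → ℝ≥0} {g : ι → ℝ → ℝ} {m₀ c₀ y C K : ℝ}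
    (hm : Tendsto m l (𝓝 m₀)) (hv : Tendsto v l (𝓝 0)) (hc : Tendsto c l (𝓝 c₀))
    (hmc : m₀ ≠ c₀) (hg : Tendsto (Function.uncurry g) (l ×ˢ 𝓝 m₀) (𝓝 y))
    (hg_meas : ∀ u, Measurable (g u)) (hg_bound : ∀ᶠ u in l, ∀ z, |g u z| ≤ C * exp (K * |z|)) :
    Tendsto (fun u => ∫ z in Ioi (c u), g u z ∂gaussianReal (m u) (v u)) l
      (𝓝 (if c₀ < m₀ then y else 0)) := by
  have hσ : Tendsto (fun u => √(v u : ℝ)) l (𝓝 0) := by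
    simpa [Function.comp_def] using ((continuous_sqrt.comp NNReal.continuous_coe).tendsto 0).comp hv
  have hstd : ∀ u, ∫ z in Ioi (c u), g u z ∂gaussianReal (m u) (v u)
      = ∫ x, (Ioi (c u)).indicator (g u) (m u + √(v u : ℝ) * x) ∂gaussianReal 0 1 := fun u => by
    rw [← integral_indicator measurableSet_Ioi, integral_gaussianReal_eq_integral_standard
      ((hg_meas u).indicator measurableSet_Ioi).aestronglyMeasurable]
  have hconst : ∫ _, (if c₀ < m₀ then y else 0) ∂gaussianReal 0 1 = if c₀ < m₀ then y else 0 := by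
    simp
  simp_rw [hstd]
  rw [← hconst]
  set R := |m₀| + 1
  refine tendsto_integral_filter_of_dominated_convergence
    (fun x => |C| * exp (|K| * R) * exp (|K| * |x|)) ?_ ?_ ?_ ?_
  · refine Eventually.of_forall fun u => ?_
    exact (((hg_meas u).indicator measurableSet_Ioi).comp (by fun_prop)).aestronglyMeasurable
  · have hmR : ∀ᶠ u in l, |m u| ≤ R :=
      (hm.abs.eventually (gt_mem_nhds (lt_add_one |m₀|))).mono fun _ h => h.le
    filter_upwards [hg_bound, hmR, hσ.eventually (ge_mem_nhds zero_lt_one)] with u hgu hmu hσu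
    refine Eventually.of_forall fun x => ?_
    set z := m u + √(v u : ℝ) * x
    have hz : |z| ≤ R + |x| := calc
      |z| ≤ |m u| + √(v u : ℝ) * |x| := by
        simpa [abs_mul, abs_of_nonneg (sqrt_nonneg _)] using abs_add_le (m u) (√(v u : ℝ) * x)
      _ ≤ R + |x| := by gcongr; nlinarith [abs_nonneg x]
    calc ‖(Ioi (c u)).indicator (g u) z‖ ≤ |g u z| := norm_indicator_le_norm_self _ _
      _ ≤ C * exp (K * |z|) := hgu z
      _ ≤ |C| * exp (|K| * (R + |x|)) := by
        gcongr
        · exact le_abs_self C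
        · exact le_abs_self K
      _ = |C| * exp (|K| * R) * exp (|K| * |x|) := by rw [mul_add, exp_add, mul_assoc]
  · exact ((integrable_exp_mul_abs (X := fun x => x) (integrable_exp_mul_gaussianReal _)
      (integrable_exp_mul_gaussianReal _)).const_mul _)
  · refine Eventually.of_forall fun x => ?_
    have hz : Tendsto (fun u => m u + √(v u : ℝ) * x) l (𝓝 m₀) := by
      simpa using hm.add (hσ.mul_const x)
    exact tendsto_indicator_Ioi_of_ne hz hc hmc (hg.comp (tendsto_id.prodMk hz))

noncomputable def kernelMean (a δ b r u : ℝ) : ℝ :=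
  r * exp (-(a * u)) + b * (1 - exp (-(a * u))) - δ ^ 2 / (2 * a ^ 2) * (1 - exp (-(a * u))) ^ 2

noncomputable def kernelVariance (a δ u : ℝ) : ℝ≥0 :=
  (δ ^ 2 / (2 * a) * (1 - exp (-(2 * a * u)))).toNNReal

section Kernel

variable {a δ u : ℝ}

lemma kernelVariance_ne_zero (ha : 0 < a) (hδ : δ ≠ 0) (hu : 0 < u) :
    kernelVariance a δ u ≠ 0 := by
  have : exp (-(2 * a * u)) < 1 := exp_lt_one_iff.mpr (by nlinarith)
  simpa [kernelVariance] using mul_pos (by positivity : 0 < δ ^ 2 / (2 * a)) (sub_pos.mpr this)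

lemma phiKer_eq_gaussianPDFReal (b r z : ℝ) (ha : 0 < a) (hu : 0 ≤ u) :
    phiKer a δ b z u r = gaussianPDFReal (kernelMean a δ b r u) (kernelVariance a δ u) z := by
  have : exp (-(2 * a * u)) ≤ 1 := exp_le_one_iff.mpr (by nlinarith)
  rw [gaussianPDFReal, kernelVariance,
    Real.coe_toNNReal _ (mul_nonneg (by positivity) (sub_nonneg.mpr this)), phiKer, kernelMean]
  congr 3 <;> ring

lemma setIntegral_phiKer_mul (b r : ℝ) (ha : 0 < a) (hδ : δ ≠ 0) (hu : 0 < u) {s : Set ℝ}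
    (hs : MeasurableSet s) (f : ℝ → ℝ) :
    ∫ z in s, phiKer a δ b z u r * f z
      = ∫ z in s, f z ∂gaussianReal (kernelMean a δ b r u) (kernelVariance a δ u) := by
  rw [← integral_indicator hs, ← integral_indicator hs,
    integral_gaussianReal_eq_integral_smul (kernelVariance_ne_zero ha hδ hu)]
  congr 1 with z
  by_cases hz : z ∈ s <;> simp [hz, phiKer_eq_gaussianPDFReal b r z ha hu.le]

end Kernel

lemma tendsto_kernelMean (a δ b r : ℝ) : Tendsto (kernelMean a δ b r) (𝓝 0) (𝓝 r) := by
  have : Continuous (kernelMean a δ b r) := by unfold kernelMean; fun_prop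
  simpa [kernelMean] using this.tendsto 0

lemma tendsto_kernelVariance (a δ : ℝ) : Tendsto (kernelVariance a δ) (𝓝 0) (𝓝 0) := by
  have : Continuous (kernelVariance a δ) := by unfold kernelVariance; fun_prop
  simpa [kernelVariance] using this.tendsto 0

lemma continuousAt_alphaCurve (a δ b : ℝ) {T t : ℝ} (ha : a ≠ 0) (ht : t ≠ T) :
    ContinuousAt (alphaCurve a δ b T) t := by
  have : 1 - exp (-(a * (T - t))) ≠ 0 := by
    rw [sub_ne_zero, ne_comm, Ne, exp_eq_one_iff, neg_eq_zero]
    exact mul_ne_zero ha (sub_ne_zero.mpr ht.symm)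
  unfold alphaCurve
  fun_prop (disch := exact this)

lemma M_eq_mul_exp (a δ b v z : ℝ) :
    M a δ b v z = M a δ b v 0 * exp (-((1 - exp (-(a * v))) / a) * z) := by
  rw [M, M, ← exp_add]; congr 1; ring

lemma abs_one_sub_M_le (a δ b v z : ℝ) :
    |1 - M a δ b v z| ≤ (1 + M a δ b v 0) * exp (|(1 - exp (-(a * v))) / a| * |z|) := by
  have hexp : -((1 - exp (-(a * v))) / a) * z ≤ |(1 - exp (-(a * v))) / a| * |z| := by
    simpa [abs_mul] using le_abs_self (-((1 - exp (-(a * v))) / a) * z)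
  have hM : 0 < M a δ b v z := exp_pos _
  have hM₀ : 0 < M a δ b v 0 := exp_pos _
  have hE : 1 ≤ exp (|(1 - exp (-(a * v))) / a| * |z|) := one_le_exp (by positivity)
  have hME : M a δ b v z ≤ M a δ b v 0 * exp (|(1 - exp (-(a * v))) / a| * |z|) := by
    rw [M_eq_mul_exp]
    gcongr
  rw [abs_le]
  constructor <;> nlinarith

lemma eventually_abs_one_sub_M_le (a δ b v₀ : ℝ) :
    ∃ C K : ℝ, ∀ᶠ v in 𝓝 v₀, ∀ z, |1 - M a δ b v z| ≤ C * exp (K * |z|) := by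
  have hC : Continuous fun v => 1 + M a δ b v 0 := by unfold M; fun_prop
  have hK : Continuous fun v => |(1 - exp (-(a * v))) / a| := by fun_prop
  refine ⟨1 + M a δ b v₀ 0 + 1, |(1 - exp (-(a * v₀))) / a| + 1, ?_⟩
  filter_upwards [(hC.tendsto v₀).eventually (ge_mem_nhds (lt_add_one _)),
    (hK.tendsto v₀).eventually (ge_mem_nhds (lt_add_one _))] with v hCv hKv z
  have hM₀ : 0 < M a δ b v₀ 0 := exp_pos _
  refine (abs_one_sub_M_le a δ b v z).trans ?_
  gcongr

theorem phi_integral_limit_general (a δ b T : ℝ) (ha : 0 < a) (hδ : 0 < δ) :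
    ∀ t : ℝ, 0 ≤ t → t < T → ∀ r : ℝ, r ≠ alphaCurve a δ b T t →
      (alphaCurve a δ b T t < r →
        Tendsto (fun u => ∫ z in Set.Ioi (alphaCurve a δ b T (t + u)),
            phiKer a δ b z u r * (1 - M a δ b (T - t - u) z))
          (nhdsWithin 0 (Set.Ioi 0)) (nhds (1 - M a δ b (T - t) r))) ∧
      (r < alphaCurve a δ b T t →
        Tendsto (fun u => ∫ z in Set.Ioi (alphaCurve a δ b T (t + u)),
            phiKer a δ b z u r * (1 - M a δ b (T - t - u) z))
          (nhdsWithin 0 (Set.Ioi 0)) (nhds 0)) := by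
  intro t _ htT r hr
  have hα : Tendsto (fun u => alphaCurve a δ b T (t + u)) (𝓝[>] 0) (𝓝 (alphaCurve a δ b T t)) := by
    have := (continuousAt_alphaCurve a δ b ha.ne' htT.ne).comp_of_eq
      (continuous_const_add t).continuousAt (add_zero t)
    simpa [Function.comp_def] using this.tendsto.mono_left nhdsWithin_le_nhds
  have hg : Tendsto (fun p : ℝ × ℝ => 1 - M a δ b (T - t - p.1) p.2) (𝓝[>] 0 ×ˢ 𝓝 r)
      (𝓝 (1 - M a δ b (T - t) r)) := by
    have hcont : Continuous fun p : ℝ × ℝ => 1 - M a δ b (T - t - p.1) p.2 := by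
      unfold M; fun_prop
    simpa using (hcont.tendsto (0, r)).mono_left
      (by rw [nhds_prod_eq]; exact prod_mono nhdsWithin_le_nhds le_rfl)
  have hlag : Tendsto (fun u : ℝ => T - t - u) (𝓝[>] 0) (𝓝 (T - t)) := by
    simpa using ((continuous_sub_left (T - t)).tendsto 0).mono_left nhdsWithin_le_nhds
  obtain ⟨C, K, hbound⟩ := eventually_abs_one_sub_M_le a δ b (T - t)
  have hlim := tendsto_setIntegral_Ioi_gaussianReal (g := fun u z => 1 - M a δ b (T - t - u) z)
    ((tendsto_kernelMean a δ b r).mono_left nhdsWithin_le_nhds)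
    ((tendsto_kernelVariance a δ).mono_left nhdsWithin_le_nhds) hα hr hg
    (fun u => by unfold M; fun_prop) (hlag.eventually hbound)
  have hphi : ∀ᶠ u in 𝓝[>] (0 : ℝ), ∫ z in Set.Ioi (alphaCurve a δ b T (t + u)),
      1 - M a δ b (T - t - u) z ∂gaussianReal (kernelMean a δ b r u) (kernelVariance a δ u)
      = ∫ z in Set.Ioi (alphaCurve a δ b T (t + u)),
          phiKer a δ b z u r * (1 - M a δ b (T - t - u) z) :=
    eventually_mem_nhdsWithin.mono fun u hu =>
      (setIntegral_phiKer_mul b r ha hδ.ne' hu measurableSet_Ioi _).symm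
  refine ⟨fun h => ?_, fun h => ?_⟩
  · simpa [h] using hlim.congr' hphi
  · simpa [h.not_gt] using hlim.congr' hphi

/-- for `t ∈ [0,T)` and `r ≠ α(t)`,
`lim_{u→0⁺} ∫_{α(t+u)}^∞ φ(z,u,r)(1 − M(T−t−u,z)) dz`
equals `1 − M(T−t,r)` if `r > α(t)` and `0` if `r < α(t)`. -/
theorem phi_integral_limit (a δ b T : ℝ) (ha : 0 < a) (hδ : 0 < δ) (hT : 0 < T) :
    ∀ t : ℝ, 0 ≤ t → t < T → ∀ r : ℝ, r ≠ alphaCurve a δ b T t →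
      (alphaCurve a δ b T t < r →
        Tendsto (fun u => ∫ z in Set.Ioi (alphaCurve a δ b T (t + u)),
            phiKer a δ b z u r * (1 - M a δ b (T - t - u) z))
          (nhdsWithin 0 (Set.Ioi 0)) (nhds (1 - M a δ b (T - t) r))) ∧
      (r < alphaCurve a δ b T t →
        Tendsto (fun u => ∫ z in Set.Ioi (alphaCurve a δ b T (t + u)),
            phiKer a δ b z u r * (1 - M a δ b (T - t - u) z))
          (nhdsWithin 0 (Set.Ioi 0)) (nhds 0)) :=
  phi_integral_limit_general a δ b T ha hδ
end

section
/- For every s ≥ 0 and r ∈ ℝ, the function M admits the absolutely convergent power series representation M(s,r) = e^{(b̃ − r − δ²/(4a²))/a} · Σ_{n=0}^{∞} e^{−(an+b̃)s} · Σ_{k=0}^{⌊n/2⌋} ((−1)^{n−k} / (k!·(n−2k)!)) · ((b̃ − r − δ²/(2a²))/a)^{n−2k} · (δ²/(4a³))^{k}. -/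
open Real

/-- The `n`-th term of the power series expansion of `M(s,r)`:
`e^{−(an+b̃)s} · Σ_{k=0}^{⌊n/2⌋} ((−1)^{n−k}/(k!(n−2k)!)) ((b̃−r−δ²/(2a²))/a)^{n−2k} (δ²/(4a³))^k`. -/
noncomputable def Mseries (a δ b s r : ℝ) (n : ℕ) : ℝ :=
  Real.exp (-(a*n + (b - δ^2/(2*a^2)))*s) *
    ∑ k ∈ Finset.range (n/2 + 1),
      ((-1:ℝ)^(n - k) / ((Nat.factorial k : ℝ) * (Nat.factorial (n - 2*k) : ℝ))) *
        (((b - δ^2/(2*a^2)) - r - δ^2/(2*a^2))/a)^(n - 2*k) * (δ^2/(4*a^3))^k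

open Finset Function Nat

theorem sum_range_succ_extend_two_mul_mul {R : Type*} [NonUnitalNonAssocSemiring R]
    (f g : ℕ → R) (n : ℕ) :
    ∑ j ∈ range (n + 1), extend (2 * ·) f 0 j * g (n - j)
      = ∑ k ∈ range (n / 2 + 1), f k * g (n - 2 * k) := by
  have hinj : Injective (2 * · : ℕ → ℕ) := mul_right_injective₀ two_ne_zero
  have hsub : (range (n / 2 + 1)).image (2 * ·) ⊆ range (n + 1) := by
    intro j hj
    simp only [mem_image, mem_range] at hj ⊢
    omega
  rw [← sum_subset hsub, sum_image hinj.injOn]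
  · exact sum_congr rfl fun k _ => by rw [hinj.extend_apply]
  · intro j hj hj'
    have hodd : ¬ ∃ k, 2 * k = j := by
      rintro ⟨k, rfl⟩
      simp only [mem_image, mem_range, not_exists, not_and] at hj hj'
      exact hj' k (by omega) rfl
    rw [extend_apply' _ _ _ hodd, Pi.zero_apply, zero_mul]

theorem Real.hasSum_pow_div_factorial (x : ℝ) : HasSum (fun n => x ^ n / n !) (exp x) := by
  rw [exp_eq_exp_ℝ]
  exact NormedSpace.expSeries_div_hasSum_exp x

theorem hasSum_extend_two_mul_pow_div_factorial (x : ℝ) :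
    HasSum (extend (2 * ·) (fun k => x ^ k / k !) 0) (exp x) :=
  (hasSum_extend_zero (mul_right_injective₀ two_ne_zero)).mpr (hasSum_pow_div_factorial x)

theorem summable_norm_extend_two_mul_pow_div_factorial (x : ℝ) :
    Summable fun j => ‖extend (2 * ·) (fun k => x ^ k / k !) 0 j‖ :=
  summable_norm_iff.mpr (hasSum_extend_two_mul_pow_div_factorial x).summable

section CauchyProduct

variable (u v : ℝ)

theorem summable_abs_sum_range_half_pow_div_factorial :
    Summable fun n : ℕ =>
      |∑ k ∈ range (n / 2 + 1), v ^ k / k ! * (u ^ (n - 2 * k) / (n - 2 * k)!)| := by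
  refine (summable_norm_sum_mul_range_of_summable_norm
    (summable_norm_extend_two_mul_pow_div_factorial v)
    (NormedSpace.norm_expSeries_div_summable u)).congr fun n => ?_
  rw [sum_range_succ_extend_two_mul_mul _ (fun m => u ^ m / m !), norm_eq_abs]

theorem tsum_sum_range_half_pow_div_factorial :
    ∑' n : ℕ, ∑ k ∈ range (n / 2 + 1), v ^ k / k ! * (u ^ (n - 2 * k) / (n - 2 * k)!)
      = exp (v + u) := by
  rw [exp_add, ← (hasSum_extend_two_mul_pow_div_factorial v).tsum_eq,
    ← (hasSum_pow_div_factorial u).tsum_eq, tsum_mul_tsum_eq_tsum_sum_range_of_summable_norm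
      (summable_norm_extend_two_mul_pow_div_factorial v)
      (NormedSpace.norm_expSeries_div_summable u)]
  exact (tsum_congr fun n => sum_range_succ_extend_two_mul_mul _ (fun m => u ^ m / m !) n).symm

end CauchyProduct

noncomputable def quadExpCoeff (p d : ℝ) (n : ℕ) : ℝ :=
  ∑ k ∈ range (n / 2 + 1),
    ((-1 : ℝ) ^ (n - k) / ((k ! : ℝ) * ((n - 2 * k)! : ℝ))) * p ^ (n - 2 * k) * d ^ k

section QuadExp

variable (p d x : ℝ)

theorem sum_range_half_pow_div_factorial_eq_quadExpCoeff_mul_pow (n : ℕ) :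
    ∑ k ∈ range (n / 2 + 1), (-(d * x ^ 2)) ^ k / k ! * ((-(p * x)) ^ (n - 2 * k) / (n - 2 * k)!)
      = quadExpCoeff p d n * x ^ n := by
  rw [quadExpCoeff, sum_mul]
  refine sum_congr rfl fun k hk => ?_
  have hkn : 2 * k ≤ n := by rw [mem_range] at hk; omega
  have hsign : (-1 : ℝ) ^ (n - k) = (-1) ^ k * (-1) ^ (n - 2 * k) := by
    rw [← pow_add]; congr 1; omega
  have hx : x ^ n = (x ^ 2) ^ k * x ^ (n - 2 * k) := by
    rw [← pow_mul, ← pow_add]; congr 1; omega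
  rw [hsign, hx, neg_pow (d * x ^ 2), neg_pow (p * x), mul_pow, mul_pow]
  ring

theorem summable_abs_quadExpCoeff_mul_pow :
    Summable fun n => |quadExpCoeff p d n * x ^ n| := by
  refine (summable_abs_sum_range_half_pow_div_factorial (-(p * x)) (-(d * x ^ 2))).congr
    fun n => ?_
  rw [sum_range_half_pow_div_factorial_eq_quadExpCoeff_mul_pow]

theorem tsum_quadExpCoeff_mul_pow :
    ∑' n, quadExpCoeff p d n * x ^ n = exp (-(d * x ^ 2) + -(p * x)) := by
  rw [← tsum_sum_range_half_pow_div_factorial]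
  exact tsum_congr fun n => (sum_range_half_pow_div_factorial_eq_quadExpCoeff_mul_pow p d x n).symm

end QuadExp

theorem Mseries_eq_mul_quadExpCoeff_mul_pow (a δ b s r : ℝ) (n : ℕ) :
    Mseries a δ b s r n
      = exp (-((b - δ^2/(2*a^2)) * s)) *
          (quadExpCoeff (((b - δ^2/(2*a^2)) - r - δ^2/(2*a^2))/a) (δ^2/(4*a^3)) n
            * exp (-(a * s)) ^ n) := by
  have hexp : exp (-(a * n + (b - δ^2/(2*a^2))) * s)
      = exp (-((b - δ^2/(2*a^2)) * s)) * exp (-(a * s)) ^ n := by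
    rw [← exp_nat_mul, ← exp_add]
    congr 1
    ring
  rw [Mseries, hexp, ← quadExpCoeff]
  ring

theorem M_power_series_general (a δ b : ℝ) :
    ∀ s ≥ (0:ℝ), ∀ r : ℝ,
      Summable (fun n => |Mseries a δ b s r n|) ∧
      M a δ b s r
        = Real.exp (((b - δ^2/(2*a^2)) - r - δ^2/(4*a^2))/a) *
            ∑' n : ℕ, Mseries a δ b s r n := by
  intro s _ r
  simp only [Mseries_eq_mul_quadExpCoeff_mul_pow]
  constructor
  · simpa only [abs_mul, abs_exp] using (summable_abs_quadExpCoeff_mul_pow _ _ _).mul_left _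
  · rw [tsum_mul_left, tsum_quadExpCoeff_mul_pow, M, ← exp_add, ← exp_add]
    congr 1
    ring

/-- for every `s ≥ 0` and `r ∈ ℝ`, `M` admits the absolutely
convergent power series representation
`M(s,r) = e^{(b̃−r−δ²/(4a²))/a} · Σ_{n=0}^∞ Mseries n`. -/
theorem M_power_series (a δ b : ℝ) (ha : 0 < a) (hδ : 0 < δ) :
    ∀ s ≥ (0:ℝ), ∀ r : ℝ,
      Summable (fun n => |Mseries a δ b s r n|) ∧
      M a δ b s r
        = Real.exp (((b - δ^2/(2*a^2)) - r - δ^2/(4*a^2))/a) *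
            ∑' n : ℕ, Mseries a δ b s r n :=
  M_power_series_general a δ b
end

section
/- Assume b̃ > 0 and fix σ > 0 and m ≥ 0. For z > 0, define φ(r,z) = ∫_0^{∞} M(t,r)·f_z(t) dt, where f_z(t) = (z/(σ√(2π t³)))·exp(−(z + m·t)²/(2σ²t)) for t > 0 is the density of the first passage time to 0 of the process z + m·t + σ·W_t. Then for every r ≥ 0 and z > 0 one has φ(r,z) < 1; moreover, for every r ≥ 0, lim_{z→0⁺} φ(r,z) = 1 and lim_{z→∞} φ(r,z) = 0. -/
open Real Filter MeasureTheory

/-- The first-passage-time density `f_z(t) = (z/(σ√(2πt³))) exp(−(z+mt)²/(2σ²t))`. -/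
noncomputable def fptDensity (σ m z t : ℝ) : ℝ :=
  z / (σ * Real.sqrt (2*Real.pi*t^3)) * Real.exp (-(z + m*t)^2/(2*σ^2*t))

/-- `φ(r,z) = ∫_0^∞ M(t,r)·f_z(t) dt`. -/
noncomputable def phiFun (a δ b σ m r z : ℝ) : ℝ :=
  ∫ t in Set.Ioi (0:ℝ), M a δ b t r * fptDensity σ m z t

open Set

set_option linter.unusedVariables false
set_option linter.unusedSectionVars false
set_option maxHeartbeats 1000000

noncomputable def gpdf (x : ℝ) : ℝ := Real.exp (-x^2/2) / Real.sqrt (2*Real.pi)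

lemma gpdf_cont : Continuous gpdf := by
  unfold gpdf; fun_prop

lemma gpdf_pos (x : ℝ) : 0 < gpdf x :=
  div_pos (Real.exp_pos _) (Real.sqrt_pos.2 (by positivity))

lemma gpdf_even (x : ℝ) : gpdf (-x) = gpdf x := by simp [gpdf, neg_sq]

lemma gpdf_integrable : Integrable gpdf := by
  have : Integrable (fun x : ℝ => Real.exp (-(1/2) * x^2)) := integrable_exp_neg_mul_sq (by norm_num)
  have h := this.div_const (Real.sqrt (2*Real.pi))
  refine h.congr (Filter.Eventually.of_forall fun x => ?_)
  unfold gpdf; ring_nf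

lemma gpdf_integral : ∫ x, gpdf x = 1 := by
  have h : ∫ x : ℝ, Real.exp (-(1/2) * x^2) = Real.sqrt (Real.pi / (1/2)) :=
    integral_gaussian (1/2)
  have h2 : ∫ x, gpdf x = (∫ x : ℝ, Real.exp (-(1/2) * x^2)) / Real.sqrt (2*Real.pi) := by
    rw [← integral_div]
    congr 1; ext x; unfold gpdf; ring_nf
  rw [h2, h]
  rw [show Real.pi / (1/2) = 2*Real.pi by ring]
  rw [div_self (by positivity)]

lemma gpdf_integrableOn (s : Set ℝ) : IntegrableOn gpdf s := gpdf_integrable.integrableOn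

lemma gpdf_integral_Ioi : ∫ x in Ioi (0:ℝ), gpdf x = 1/2 := by
  have hs : ∫ x in Iic (0:ℝ), gpdf x = ∫ x in Ioi (0:ℝ), gpdf x := by
    rw [show (0:ℝ) = -0 by ring, ← integral_comp_neg_Ioi]
    simp [gpdf_even]
  have := intervalIntegral.integral_Iic_add_Ioi (b := (0:ℝ)) (gpdf_integrableOn _) (gpdf_integrableOn _)
  rw [gpdf_integral, hs] at this
  linarith

lemma gpdf_integral_Iic : ∫ x in Iic (0:ℝ), gpdf x = 1/2 := by
  have := intervalIntegral.integral_Iic_add_Ioi (b := (0:ℝ)) (gpdf_integrableOn _) (gpdf_integrableOn _)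
  rw [gpdf_integral, gpdf_integral_Ioi] at this
  linarith

noncomputable def Phi (x : ℝ) : ℝ := 1/2 + ∫ t in (0:ℝ)..x, gpdf t

lemma Phi_hasDerivAt (x : ℝ) : HasDerivAt Phi (gpdf x) x := by
  have h : HasDerivAt (fun u => ∫ t in (0:ℝ)..u, gpdf t) (gpdf x) x :=
    intervalIntegral.integral_hasDerivAt_right (gpdf_integrable.intervalIntegrable)
      gpdf_cont.aestronglyMeasurable.stronglyMeasurableAtFilter gpdf_cont.continuousAt
  have := h.const_add (1/2 : ℝ)
  exact this

lemma Phi_continuous : Continuous Phi :=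
  continuous_iff_continuousAt.2 fun x => (Phi_hasDerivAt x).continuousAt

lemma Phi_zero : Phi 0 = 1/2 := by simp [Phi]

lemma Phi_add_neg (x : ℝ) : Phi x + Phi (-x) = 1 := by
  have h : ∫ t in (0:ℝ)..(-x), gpdf t = - ∫ t in (0:ℝ)..x, gpdf t := by
    rw [show (0:ℝ) = -0 by ring, ← intervalIntegral.integral_comp_neg gpdf]
    simp [gpdf_even, intervalIntegral.integral_symm x 0]
  simp only [Phi, h]; ring

lemma Phi_tendsto_atTop : Tendsto Phi atTop (nhds 1) := by
  have h := intervalIntegral_tendsto_integral_Ioi 0 (gpdf_integrableOn (Ioi 0)) tendsto_id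
  rw [gpdf_integral_Ioi] at h
  have h2 := h.const_add (1/2 : ℝ)
  norm_num at h2
  exact h2

lemma Phi_tendsto_atBot : Tendsto Phi atBot (nhds 0) := by
  have h := intervalIntegral_tendsto_integral_Iic 0 (gpdf_integrableOn (Iic 0)) tendsto_id
  rw [gpdf_integral_Iic] at h
  have h2 : Tendsto (fun x : ℝ => 1/2 - ∫ t in x..(0:ℝ), gpdf t) atBot (nhds 0) := by
    have := h.const_sub (1/2 : ℝ)
    norm_num at this
    simpa using this
  refine h2.congr fun x => ?_
  rw [intervalIntegral.integral_symm]
  simp [Phi]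

lemma Phi_mono : Monotone Phi :=
  monotone_of_deriv_nonneg (fun x => (Phi_hasDerivAt x).differentiableAt)
    (fun x => by rw [(Phi_hasDerivAt x).deriv]; exact (gpdf_pos x).le)

lemma Phi_nonneg (x : ℝ) : 0 ≤ Phi x :=
  le_of_tendsto Phi_tendsto_atBot (eventually_atBot.2 ⟨x, fun y hy => Phi_mono hy⟩)

lemma Phi_le_one (x : ℝ) : Phi x ≤ 1 :=
  ge_of_tendsto Phi_tendsto_atTop (eventually_atTop.2 ⟨x, fun y hy => Phi_mono hy⟩)


noncomputable def Fcdf (σ m z t : ℝ) : ℝ :=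
  if t ≤ 0 then 0 else
    Phi (-(z + m*t)/(σ * Real.sqrt t)) + Real.exp (-(2*m*z/σ^2)) * Phi ((m*t - z)/(σ * Real.sqrt t))

lemma Fcdf_hasDerivAt (σ m z : ℝ) (hσ : 0 < σ) {t : ℝ} (ht : 0 < t) :
    HasDerivAt (Fcdf σ m z) (fptDensity σ m z t) t := by
  obtain ⟨s, hs0, rfl⟩ : ∃ s : ℝ, 0 < s ∧ s^2 = t :=
    ⟨Real.sqrt t, Real.sqrt_pos.2 ht, Real.sq_sqrt ht.le⟩
  have hss : Real.sqrt (s^2) = s := Real.sqrt_sq hs0.le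
  have hden : σ * s ≠ 0 := by positivity
  have hπ : (0:ℝ) < Real.sqrt (2*Real.pi) := Real.sqrt_pos.2 (by positivity)
  have hnum_u : HasDerivAt (fun x : ℝ => -(z + m*x)) (-m) (s^2) := by
    have h := (((hasDerivAt_id (s^2)).const_mul m).const_add z).neg
    rw [mul_one] at h
    exact h
  have hnum_v : HasDerivAt (fun x : ℝ => m*x - z) m (s^2) := by
    simpa using ((hasDerivAt_id (s^2)).const_mul m).sub_const z
  have hden_d : HasDerivAt (fun x : ℝ => σ * Real.sqrt x) (σ * (1 / (2 * s))) (s^2) := by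
    have := (Real.hasDerivAt_sqrt (by positivity : (s:ℝ)^2 ≠ 0)).const_mul σ
    rwa [hss] at this
  have hu : HasDerivAt (fun x : ℝ => -(z + m*x)/(σ * Real.sqrt x))
      (((-m) * (σ * s) - (-(z + m*s^2)) * (σ * (1 / (2 * s)))) / (σ * s)^2) (s^2) := by
    have := hnum_u.div hden_d (by rw [hss]; exact hden)
    rwa [hss] at this
  have hv : HasDerivAt (fun x : ℝ => (m*x - z)/(σ * Real.sqrt x))
      ((m * (σ * s) - (m*s^2 - z) * (σ * (1 / (2 * s)))) / (σ * s)^2) (s^2) := by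
    have := hnum_v.div hden_d (by rw [hss]; exact hden)
    rwa [hss] at this
  set u' := ((-m) * (σ * s) - (-(z + m*s^2)) * (σ * (1 / (2 * s)))) / (σ * s)^2 with hu'
  set v' := (m * (σ * s) - (m*s^2 - z) * (σ * (1 / (2 * s)))) / (σ * s)^2 with hv'
  have hPhiu : HasDerivAt Phi (gpdf (-(z + m*s^2)/(σ * s))) (-(z + m*s^2)/(σ * Real.sqrt (s^2))) := by
    rw [hss]; exact Phi_hasDerivAt _
  have hPhiv : HasDerivAt Phi (gpdf ((m*s^2 - z)/(σ * s))) ((m*s^2 - z)/(σ * Real.sqrt (s^2))) := by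
    rw [hss]; exact Phi_hasDerivAt _
  have hPu := hPhiu.comp (s^2) hu
  have hPv := (hPhiv.comp (s^2) hv).const_mul (Real.exp (-(2*m*z/σ^2)))
  have hF : HasDerivAt (fun x : ℝ => Phi (-(z + m*x)/(σ * Real.sqrt x)) +
      Real.exp (-(2*m*z/σ^2)) * Phi ((m*x - z)/(σ * Real.sqrt x)))
      (gpdf (-(z + m*s^2)/(σ * s)) * u' +
        Real.exp (-(2*m*z/σ^2)) * (gpdf ((m*s^2 - z)/(σ * s)) * v')) (s^2) := by
    have := hPu.add hPv
    exact this
  have heq : Fcdf σ m z =ᶠ[nhds (s^2)] (fun x : ℝ => Phi (-(z + m*x)/(σ * Real.sqrt x)) +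
      Real.exp (-(2*m*z/σ^2)) * Phi ((m*x - z)/(σ * Real.sqrt x))) := by
    filter_upwards [lt_mem_nhds (by positivity : (0:ℝ) < s^2)] with x hx
    simp [Fcdf, not_le.2 hx]
  have hexp : Real.exp (-(2*m*z/σ^2)) * Real.exp (-((m*s^2 - z)/(σ * s))^2/2)
      = Real.exp (-((-(z + m*s^2)/(σ * s)))^2/2) := by
    rw [← Real.exp_add]
    congr 1
    field_simp
    ring
  have hexp2 : Real.exp (-((-(z + m*s^2)/(σ * s)))^2/2)
      = Real.exp (-(z + m*s^2)^2/(2*σ^2*s^2)) := by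
    congr 1
    field_simp
  have hsum : u' + v' = z / (σ * (s^2 * s)) := by
    rw [hu', hv', ← add_div, div_eq_div_iff (by positivity) (by positivity)]
    field_simp
    ring
  have hsqrt3 : Real.sqrt (2*Real.pi*(s^2)^3) = Real.sqrt (2*Real.pi) * (s^2 * s) := by
    rw [Real.sqrt_mul (by positivity), show ((s:ℝ)^2)^3 = (s^2*s)^2 by ring,
      Real.sqrt_sq (by positivity)]
  have hval : gpdf (-(z + m*s^2)/(σ * s)) * u' +
      Real.exp (-(2*m*z/σ^2)) * (gpdf ((m*s^2 - z)/(σ * s)) * v') = fptDensity σ m z (s^2) := by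
    unfold gpdf fptDensity
    rw [hsqrt3]
    calc Real.exp (-(-(z + m*s^2)/(σ * s))^2/2) / Real.sqrt (2*Real.pi) * u' +
          Real.exp (-(2*m*z/σ^2)) * (Real.exp (-((m*s^2 - z)/(σ * s))^2/2) / Real.sqrt (2*Real.pi) * v')
        = (Real.exp (-(-(z + m*s^2)/(σ * s))^2/2) * u' +
            (Real.exp (-(2*m*z/σ^2)) * Real.exp (-((m*s^2 - z)/(σ * s))^2/2)) * v') / Real.sqrt (2*Real.pi) := by
          ring
      _ = Real.exp (-(z + m*s^2)^2/(2*σ^2*s^2)) * (u' + v') / Real.sqrt (2*Real.pi) := by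
          rw [hexp, hexp2]; ring
      _ = Real.exp (-(z + m*s^2)^2/(2*σ^2*s^2)) * (z / (σ * (s^2 * s))) / Real.sqrt (2*Real.pi) := by
          rw [hsum]
      _ = z / (σ * (Real.sqrt (2*Real.pi) * (s^2 * s))) * Real.exp (-(z + m*s^2)^2/(2*σ^2*s^2)) := by
          field_simp
  rw [← hval]
  exact hF.congr_of_eventuallyEq heq


lemma sqrt_tendsto_atTop : Tendsto Real.sqrt atTop atTop := by
  rw [tendsto_atTop_atTop]
  intro b
  refine ⟨max 0 (b^2), fun x hx => ?_⟩
  rcases le_or_gt b 0 with hb | hb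
  · exact hb.trans (Real.sqrt_nonneg x)
  · have hx2 : b^2 ≤ x := le_trans (le_max_right _ _) hx
    calc b = Real.sqrt (b^2) := (Real.sqrt_sq hb.le).symm
      _ ≤ Real.sqrt x := Real.sqrt_le_sqrt hx2

lemma Fcdf_continuousWithinAt (σ m z : ℝ) (hσ : 0 < σ) (hm : 0 ≤ m) (hz : 0 < z) :
    ContinuousWithinAt (Fcdf σ m z) (Ici 0) 0 := by
  have h0 : Fcdf σ m z 0 = 0 := by simp [Fcdf]
  unfold ContinuousWithinAt
  rw [h0, show Ici (0:ℝ) = {0} ∪ Ioi 0 by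
      rw [← Ioi_union_left]; exact union_comm _ _,
    nhdsWithin_union, nhdsWithin_singleton]
  refine Tendsto.sup ?_ ?_
  · rw [tendsto_pure_left]
    intro s hs
    simpa [h0] using mem_of_mem_nhds hs
  · -- limit along Ioi 0
    have hinv : Tendsto (fun x : ℝ => (σ * Real.sqrt x)⁻¹) (nhdsWithin 0 (Ioi 0)) atTop := by
      apply tendsto_inv_nhdsGT_zero.comp
      apply tendsto_nhdsWithin_of_tendsto_nhds_of_eventually_within
      · have : Tendsto (fun x : ℝ => σ * Real.sqrt x) (nhds 0) (nhds (σ * Real.sqrt 0)) :=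
          (continuous_const.mul Real.continuous_sqrt).tendsto 0
        simpa using this.mono_left nhdsWithin_le_nhds
      · filter_upwards [self_mem_nhdsWithin] with x hx
        exact mul_pos hσ (Real.sqrt_pos.2 hx)
    have hu : Tendsto (fun x : ℝ => -(z + m*x)/(σ * Real.sqrt x)) (nhdsWithin 0 (Ioi 0)) atBot := by
      have hnum : Tendsto (fun x : ℝ => -(z + m*x)) (nhdsWithin 0 (Ioi 0)) (nhds (-z)) := by
        have : Tendsto (fun x : ℝ => -(z + m*x)) (nhds 0) (nhds (-(z + m*0))) :=
          Continuous.tendsto (by fun_prop) 0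
        simpa using this.mono_left nhdsWithin_le_nhds
      simpa [div_eq_mul_inv] using hnum.neg_mul_atTop (by linarith) hinv
    have hv : Tendsto (fun x : ℝ => (m*x - z)/(σ * Real.sqrt x)) (nhdsWithin 0 (Ioi 0)) atBot := by
      have hnum : Tendsto (fun x : ℝ => m*x - z) (nhdsWithin 0 (Ioi 0)) (nhds (-z)) := by
        have : Tendsto (fun x : ℝ => m*x - z) (nhds 0) (nhds (m*0 - z)) :=
          Continuous.tendsto (by fun_prop) 0
        simpa using this.mono_left nhdsWithin_le_nhds
      simpa [div_eq_mul_inv] using hnum.neg_mul_atTop (by linarith) hinv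
    have h1 := Phi_tendsto_atBot.comp hu
    have h2 := (Phi_tendsto_atBot.comp hv).const_mul (Real.exp (-(2*m*z/σ^2)))
    have hsum := h1.add h2
    refine Tendsto.congr' ?_ (by simpa using hsum)
    filter_upwards [self_mem_nhdsWithin] with x (hx : 0 < x)
    simp [Fcdf, not_le.2 hx, Function.comp]

lemma Fcdf_tendsto_atTop (σ m z : ℝ) (hσ : 0 < σ) (hm : 0 ≤ m) (hz : 0 < z) :
    Tendsto (Fcdf σ m z) atTop (nhds (Real.exp (-(2*m*z/σ^2)))) := by
  have hiinv : Tendsto (fun x : ℝ => (Real.sqrt x)⁻¹) atTop (nhds 0) :=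
    sqrt_tendsto_atTop.inv_tendsto_atTop
  have hueq : ∀ᶠ x : ℝ in atTop, -(z + m*x)/(σ * Real.sqrt x)
      = -(z/σ) * (Real.sqrt x)⁻¹ + (-(m/σ)) * Real.sqrt x := by
    filter_upwards [eventually_gt_atTop 0] with x hx
    have hsx : Real.sqrt x ≠ 0 := (Real.sqrt_pos.2 hx).ne'
    have h2 : Real.sqrt x * Real.sqrt x = x := Real.mul_self_sqrt hx.le
    field_simp
    linear_combination m * h2
  have hveq : ∀ᶠ x : ℝ in atTop, (m*x - z)/(σ * Real.sqrt x)
      = -(z/σ) * (Real.sqrt x)⁻¹ + (m/σ) * Real.sqrt x := by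
    filter_upwards [eventually_gt_atTop 0] with x hx
    have hsx : Real.sqrt x ≠ 0 := (Real.sqrt_pos.2 hx).ne'
    have h2 : Real.sqrt x * Real.sqrt x = x := Real.mul_self_sqrt hx.le
    field_simp
    linear_combination (-m) * h2
  have hzero : Tendsto (fun x : ℝ => -(z/σ) * (Real.sqrt x)⁻¹) atTop (nhds 0) := by
    simpa using hiinv.const_mul (-(z/σ))
  have hFeq : ∀ᶠ x : ℝ in atTop, Fcdf σ m z x
      = Phi (-(z + m*x)/(σ * Real.sqrt x)) +
        Real.exp (-(2*m*z/σ^2)) * Phi ((m*x - z)/(σ * Real.sqrt x)) := by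
    filter_upwards [eventually_gt_atTop 0] with x hx
    simp [Fcdf, not_le.2 hx]
  rcases hm.eq_or_lt with hm0 | hm0
  · -- m = 0
    subst hm0
    have hu : Tendsto (fun x : ℝ => -(z + 0*x)/(σ * Real.sqrt x)) atTop (nhds 0) := by
      refine Tendsto.congr' (hueq.mono fun x hx => hx.symm) ?_
      simpa using hzero
    have hv : Tendsto (fun x : ℝ => (0*x - z)/(σ * Real.sqrt x)) atTop (nhds 0) := by
      refine Tendsto.congr' (hveq.mono fun x hx => hx.symm) ?_
      simpa using hzero
    have h1 := (Phi_continuous.tendsto 0).comp hu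
    have h2 := ((Phi_continuous.tendsto 0).comp hv).const_mul (Real.exp (-(2*0*z/σ^2)))
    have hsum := h1.add h2
    rw [Phi_zero] at hsum
    have hone : (1:ℝ)/2 + Real.exp (-(2*0*z/σ^2)) * (1/2) = Real.exp (-(2*0*z/σ^2)) := by
      norm_num
    rw [hone] at hsum
    refine Tendsto.congr' ?_ hsum
    filter_upwards [eventually_gt_atTop 0] with x hx
    simp [Fcdf, not_le.2 hx, Function.comp]
  · -- m > 0
    have hsqTop : Tendsto (fun x : ℝ => (m/σ) * Real.sqrt x) atTop atTop :=
      (sqrt_tendsto_atTop.const_mul_atTop (by positivity))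
    have hsqBot : Tendsto (fun x : ℝ => (-(m/σ)) * Real.sqrt x) atTop atBot :=
      sqrt_tendsto_atTop.const_mul_atTop_of_neg (neg_neg_iff_pos.mpr (by positivity))
    have hu : Tendsto (fun x : ℝ => -(z + m*x)/(σ * Real.sqrt x)) atTop atBot := by
      refine Tendsto.congr' (hueq.mono fun x hx => hx.symm) ?_
      exact hzero.add_atBot hsqBot
    have hv : Tendsto (fun x : ℝ => (m*x - z)/(σ * Real.sqrt x)) atTop atTop := by
      refine Tendsto.congr' (hveq.mono fun x hx => hx.symm) ?_
      exact hzero.add_atTop hsqTop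
    have h1 := Phi_tendsto_atBot.comp hu
    have h2 := (Phi_tendsto_atTop.comp hv).const_mul (Real.exp (-(2*m*z/σ^2)))
    have hlim := h1.add h2
    refine Tendsto.congr' ?_ (by simpa using hlim)
    filter_upwards [eventually_gt_atTop 0] with x hx
    simp [Fcdf, not_le.2 hx, Function.comp]

lemma Fcdf_tendsto_z_atTop (σ m T : ℝ) (hσ : 0 < σ) (hm : 0 ≤ m) (hT : 0 < T) :
    Tendsto (fun z => Fcdf σ m z T) atTop (nhds 0) := by
  have hsT : 0 < Real.sqrt T := Real.sqrt_pos.2 hT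
  have key : ∀ c : ℝ, Tendsto (fun z : ℝ => z * (-(1/(σ * Real.sqrt T))) + c) atTop atBot :=
    fun c => tendsto_atBot_add_const_right _ c
      (tendsto_id.atTop_mul_const_of_neg (by simp; positivity))
  have harg1 : Tendsto (fun z : ℝ => -(z + m*T)/(σ * Real.sqrt T)) atTop atBot := by
    refine (key (-(m*T)/(σ * Real.sqrt T))).congr fun z => ?_
    field_simp
    ring
  have harg2 : Tendsto (fun z : ℝ => (m*T - z)/(σ * Real.sqrt T)) atTop atBot := by
    refine (key ((m*T)/(σ * Real.sqrt T))).congr fun z => ?_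
    field_simp
    ring
  have h1 : Tendsto (fun z => Phi (-(z + m*T)/(σ * Real.sqrt T))) atTop (nhds 0) :=
    Phi_tendsto_atBot.comp harg1
  have h2 : Tendsto (fun z => Real.exp (-(2*m*z/σ^2)) * Phi ((m*T - z)/(σ * Real.sqrt T)))
      atTop (nhds 0) := by
    have hg : Tendsto (fun z => Phi ((m*T - z)/(σ * Real.sqrt T))) atTop (nhds 0) :=
      Phi_tendsto_atBot.comp harg2
    refine squeeze_zero' ?_ ?_ hg
    · filter_upwards with z
      exact mul_nonneg (Real.exp_pos _).le (Phi_nonneg _)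
    · filter_upwards [eventually_ge_atTop 0] with z hz
      have he : Real.exp (-(2*m*z/σ^2)) ≤ 1 := by
        rw [Real.exp_le_one_iff]
        have : 0 ≤ 2*m*z/σ^2 := by positivity
        linarith
      calc Real.exp (-(2*m*z/σ^2)) * Phi ((m*T - z)/(σ * Real.sqrt T))
          ≤ 1 * Phi ((m*T - z)/(σ * Real.sqrt T)) :=
            mul_le_mul_of_nonneg_right he (Phi_nonneg _)
        _ = _ := one_mul _
  have := h1.add h2
  norm_num at this
  refine this.congr fun z => ?_
  simp [Fcdf, not_le.2 hT]

lemma Fcdf_tendsto_z_zero (σ m s : ℝ) (hσ : 0 < σ) (hm : 0 ≤ m) (hs : 0 < s) :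
    Tendsto (fun z => Fcdf σ m z s) (nhdsWithin 0 (Ioi 0)) (nhds 1) := by
  have hss : 0 < Real.sqrt s := Real.sqrt_pos.2 hs
  have hc : Continuous (fun z : ℝ => Phi (-(z + m*s)/(σ * Real.sqrt s)) +
      Real.exp (-(2*m*z/σ^2)) * Phi ((m*s - z)/(σ * Real.sqrt s))) := by
    apply Continuous.add
    · exact Phi_continuous.comp (by fun_prop)
    · exact (Real.continuous_exp.comp (by fun_prop)).mul (Phi_continuous.comp (by fun_prop))
  have hval : Phi (-((0:ℝ) + m*s)/(σ * Real.sqrt s)) +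
      Real.exp (-(2*m*0/σ^2)) * Phi ((m*s - 0)/(σ * Real.sqrt s)) = 1 := by
    have := Phi_add_neg (m*s/(σ * Real.sqrt s))
    rw [show -((0:ℝ) + m*s)/(σ * Real.sqrt s) = -(m*s/(σ * Real.sqrt s)) by ring]
    norm_num
    linarith
  have := (hc.tendsto 0).mono_left (nhdsWithin_le_nhds (s := Ioi 0))
  rw [hval] at this
  refine this.congr' ?_
  filter_upwards [self_mem_nhdsWithin] with z (hz : 0 < z)
  simp [Fcdf, not_le.2 hs]


lemma M_pos (a δ b r u : ℝ) : 0 < M a δ b u r := Real.exp_pos _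

section Mbounds
variable {a δ b r : ℝ} (ha : 0 < a) (hb : 0 < b - δ^2/(2*a^2)) (hr : 0 ≤ r)

include ha in
lemma w_bounds {u : ℝ} (hu : 0 ≤ u) :
    0 ≤ 1 - Real.exp (-(a*u)) ∧ 1 - Real.exp (-(a*u)) ≤ a*u ∧ 1 - Real.exp (-(a*u)) ≤ 1 := by
  have h1 : Real.exp (-(a*u)) ≤ 1 := Real.exp_le_one_iff.2 (by nlinarith)
  have h2 := Real.add_one_le_exp (-(a*u))
  have h3 : 0 < Real.exp (-(a*u)) := Real.exp_pos _
  exact ⟨by linarith, by linarith, by linarith⟩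

include ha hb hr in
lemma M_exponent_le {u : ℝ} (hu : 0 ≤ u) :
    -(b - δ^2/(2*a^2))*u + ((b - δ^2/(2*a^2)) - r)/a * (1 - Real.exp (-(a*u)))
      - δ^2/(4*a^3) * (1 - Real.exp (-(a*u)))^2 ≤ 0 := by
  obtain ⟨hw0, hw1, hw2⟩ := w_bounds ha hu
  set c := b - δ^2/(2*a^2) with hc
  set w := 1 - Real.exp (-(a*u)) with hwdef
  have hd : 0 ≤ δ^2/(4*a^3) * w^2 := by positivity
  have key : (c - r)/a * w ≤ c*u := by
    calc (c - r)/a * w ≤ c/a * w :=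
          mul_le_mul_of_nonneg_right ((div_le_div_iff_of_pos_right ha).mpr (by linarith)) hw0
      _ ≤ c/a * (a*u) := mul_le_mul_of_nonneg_left hw1 (by positivity)
      _ = c*u := by field_simp
  linarith

include ha hb hr in
lemma M_le_one {u : ℝ} (hu : 0 ≤ u) : M a δ b u r ≤ 1 := by
  rw [M, Real.exp_le_one_iff]
  exact M_exponent_le ha hb hr hu

include ha hb hr in
lemma M_lt_one {u : ℝ} (hu : 0 < u) : M a δ b u r < 1 := by
  rw [M, Real.exp_lt_one_iff]
  obtain ⟨hw0, hw1, hw2⟩ := w_bounds ha hu.le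
  have hwlt : 1 - Real.exp (-(a*u)) < a*u := by
    have := Real.add_one_lt_exp (x := -(a*u)) (by nlinarith)
    linarith
  set c := b - δ^2/(2*a^2) with hc
  set w := 1 - Real.exp (-(a*u)) with hwdef
  have hd : 0 ≤ δ^2/(4*a^3) * w^2 := by positivity
  have key : (c - r)/a * w < c*u := by
    calc (c - r)/a * w ≤ c/a * w :=
          mul_le_mul_of_nonneg_right ((div_le_div_iff_of_pos_right ha).mpr (by linarith)) hw0
      _ < c/a * (a*u) := mul_lt_mul_of_pos_left hwlt (div_pos hb ha)
      _ = c*u := by field_simp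
  linarith

include ha hb hr in
lemma M_le_decay {u : ℝ} (hu : 0 ≤ u) :
    M a δ b u r ≤ Real.exp ((b - δ^2/(2*a^2))/a - (b - δ^2/(2*a^2))*u) := by
  rw [M, Real.exp_le_exp]
  obtain ⟨hw0, hw1, hw2⟩ := w_bounds ha hu
  set c := b - δ^2/(2*a^2) with hc
  set w := 1 - Real.exp (-(a*u)) with hwdef
  have hd : 0 ≤ δ^2/(4*a^3) * w^2 := by positivity
  have key : (c - r)/a * w ≤ c/a := by
    calc (c - r)/a * w ≤ c/a * w :=
          mul_le_mul_of_nonneg_right ((div_le_div_iff_of_pos_right ha).mpr (by linarith)) hw0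
      _ ≤ c/a * 1 := mul_le_mul_of_nonneg_left hw2 (by positivity)
      _ = c/a := mul_one _
  linarith

include ha hb hr in
lemma one_sub_M_le {u : ℝ} (hu : 0 ≤ u) (hu1 : u ≤ 1) :
    1 - M a δ b u r ≤ ((b - δ^2/(2*a^2)) + |b - δ^2/(2*a^2) - r| + δ^2/(4*a)) * u := by
  obtain ⟨hw0, hw1, hw2⟩ := w_bounds ha hu
  set c := b - δ^2/(2*a^2) with hc
  set w := 1 - Real.exp (-(a*u)) with hwdef
  set E := -c*u + (c - r)/a * w - δ^2/(4*a^3) * w^2 with hE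
  have h1 : 1 - M a δ b u r ≤ -E := by
    have := Real.add_one_le_exp E
    have hM : M a δ b u r = Real.exp E := rfl
    rw [hM]; linarith
  have h2 : -((c - r)/a * w) ≤ |c - r| * u := by
    calc -((c - r)/a * w) ≤ |(c - r)/a * w| := neg_le_abs _
      _ = (|c - r|/a) * w := by
          rw [abs_mul, abs_div, abs_of_pos ha, abs_of_nonneg hw0]
      _ ≤ (|c - r|/a) * (a*u) := mul_le_mul_of_nonneg_left hw1 (by positivity)
      _ = |c - r| * u := by field_simp
  have h3 : δ^2/(4*a^3) * w^2 ≤ δ^2/(4*a) * u := by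
    have hwsq : w^2 ≤ a^2 * u := by
      have hww : w*w ≤ (a*u)*(a*u) := mul_le_mul hw1 hw1 hw0 (by positivity)
      have hu2 : u*u ≤ u := by nlinarith
      nlinarith [sq_nonneg a]
    calc δ^2/(4*a^3) * w^2 ≤ δ^2/(4*a^3) * (a^2*u) :=
          mul_le_mul_of_nonneg_left hwsq (by positivity)
      _ = δ^2/(4*a) * u := by field_simp
  have : -E ≤ (c + |c - r| + δ^2/(4*a)) * u := by
    rw [hE]; linarith
  exact h1.trans this

end Mbounds


-- second layer
lemma Fcdf_zero (σ m z : ℝ) : Fcdf σ m z 0 = 0 := by simp [Fcdf]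

lemma M_continuous (a δ b r : ℝ) : Continuous (fun u => M a δ b u r) := by
  unfold M; fun_prop

lemma fpt_pos {σ z : ℝ} (hσ : 0 < σ) (hz : 0 < z) (m : ℝ) {t : ℝ} (ht : 0 < t) :
    0 < fptDensity σ m z t := by
  unfold fptDensity
  have h1 : 0 < Real.sqrt (2*Real.pi*t^3) := Real.sqrt_pos.2 (by positivity)
  positivity

lemma fpt_integrableOn {σ m z : ℝ} (hσ : 0 < σ) (hm : 0 ≤ m) (hz : 0 < z) :
    IntegrableOn (fptDensity σ m z) (Ioi 0) :=
  integrableOn_Ioi_deriv_of_nonneg (Fcdf_continuousWithinAt σ m z hσ hm hz)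
    (fun t ht => Fcdf_hasDerivAt σ m z hσ ht)
    (fun t ht => (fpt_pos hσ hz m ht).le)
    (Fcdf_tendsto_atTop σ m z hσ hm hz)

lemma fpt_integral {σ m z : ℝ} (hσ : 0 < σ) (hm : 0 ≤ m) (hz : 0 < z) :
    ∫ t in Ioi (0:ℝ), fptDensity σ m z t = Real.exp (-(2*m*z/σ^2)) := by
  have := integral_Ioi_of_hasDerivAt_of_tendsto (Fcdf_continuousWithinAt σ m z hσ hm hz)
    (fun t ht => Fcdf_hasDerivAt σ m z hσ ht) (fpt_integrableOn hσ hm hz)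
    (Fcdf_tendsto_atTop σ m z hσ hm hz)
  rw [this, Fcdf_zero, sub_zero]

lemma fpt_integral_Ioi {σ m z : ℝ} (hσ : 0 < σ) (hm : 0 ≤ m) (hz : 0 < z)
    {s : ℝ} (hs : 0 < s) :
    ∫ t in Ioi s, fptDensity σ m z t = Real.exp (-(2*m*z/σ^2)) - Fcdf σ m z s :=
  integral_Ioi_of_hasDerivAt_of_tendsto
    (Fcdf_hasDerivAt σ m z hσ hs).continuousAt.continuousWithinAt
    (fun t ht => Fcdf_hasDerivAt σ m z hσ (hs.trans ht))
    ((fpt_integrableOn hσ hm hz).mono_set (Ioi_subset_Ioi hs.le))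
    (Fcdf_tendsto_atTop σ m z hσ hm hz)

lemma fpt_integral_Ioc {σ m z : ℝ} (hσ : 0 < σ) (hm : 0 ≤ m) (hz : 0 < z)
    {s : ℝ} (hs : 0 < s) :
    ∫ t in Ioc 0 s, fptDensity σ m z t = Fcdf σ m z s := by
  have hsplit : (∫ t in Ioc 0 s, fptDensity σ m z t) + ∫ t in Ioi s, fptDensity σ m z t
      = ∫ t in Ioi (0:ℝ), fptDensity σ m z t := by
    rw [← setIntegral_union (Ioc_disjoint_Ioi le_rfl) measurableSet_Ioi
      ((fpt_integrableOn hσ hm hz).mono_set Ioc_subset_Ioi_self)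
      ((fpt_integrableOn hσ hm hz).mono_set (Ioi_subset_Ioi hs.le)),
      Ioc_union_Ioi_eq_Ioi hs.le]
  rw [fpt_integral hσ hm hz, fpt_integral_Ioi hσ hm hz hs] at hsplit
  linarith

lemma Mf_integrableOn {a δ b σ m z : ℝ} (ha : 0 < a) (hb : 0 < b - δ^2/(2*a^2))
    {r : ℝ} (hr : 0 ≤ r) (hσ : 0 < σ) (hm : 0 ≤ m) (hz : 0 < z) :
    IntegrableOn (fun t => M a δ b t r * fptDensity σ m z t) (Ioi 0) := by
  apply Integrable.mono (fpt_integrableOn hσ hm hz)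
    (((M_continuous a δ b r).aestronglyMeasurable.restrict).mul
      (fpt_integrableOn hσ hm hz).aestronglyMeasurable)
  rw [ae_restrict_iff' measurableSet_Ioi]
  filter_upwards with t ht
  have hMpos := M_pos a δ b r t
  have hM1 := M_le_one ha hb hr (le_of_lt ht)
  have hfpos := fpt_pos hσ hz m ht
  simp only [Pi.mul_apply]
  rw [Real.norm_eq_abs, Real.norm_eq_abs, abs_of_pos hfpos, abs_of_pos (by positivity)]
  nlinarith

lemma oneMf_integrableOn {a δ b σ m z : ℝ} (ha : 0 < a) (hb : 0 < b - δ^2/(2*a^2))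
    {r : ℝ} (hr : 0 ≤ r) (hσ : 0 < σ) (hm : 0 ≤ m) (hz : 0 < z) :
    IntegrableOn (fun t => (1 - M a δ b t r) * fptDensity σ m z t) (Ioi 0) := by
  apply Integrable.mono (fpt_integrableOn hσ hm hz)
    (((continuous_const.sub (M_continuous a δ b r)).aestronglyMeasurable.restrict).mul
      (fpt_integrableOn hσ hm hz).aestronglyMeasurable)
  rw [ae_restrict_iff' measurableSet_Ioi]
  filter_upwards with t ht
  have hMpos := M_pos a δ b r t
  have hM1 := M_le_one ha hb hr (le_of_lt ht)
  have hfpos := fpt_pos hσ hz m ht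
  simp only [Pi.mul_apply, Pi.sub_apply]
  rw [Real.norm_eq_abs, Real.norm_eq_abs, abs_of_pos hfpos, abs_of_nonneg (by nlinarith)]
  nlinarith

lemma phi_eq {a δ b σ m z : ℝ} (ha : 0 < a) (hb : 0 < b - δ^2/(2*a^2))
    {r : ℝ} (hr : 0 ≤ r) (hσ : 0 < σ) (hm : 0 ≤ m) (hz : 0 < z) :
    phiFun a δ b σ m r z = Real.exp (-(2*m*z/σ^2))
      - ∫ t in Ioi (0:ℝ), (1 - M a δ b t r) * fptDensity σ m z t := by
  rw [phiFun, ← fpt_integral hσ hm hz,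
    ← integral_sub (fpt_integrableOn hσ hm hz) (oneMf_integrableOn ha hb hr hσ hm hz)]
  congr 1; funext t; ring

lemma oneMf_pos {a δ b σ m z : ℝ} (ha : 0 < a) (hb : 0 < b - δ^2/(2*a^2))
    {r : ℝ} (hr : 0 ≤ r) (hσ : 0 < σ) (hm : 0 ≤ m) (hz : 0 < z) :
    0 < ∫ t in Ioi (0:ℝ), (1 - M a δ b t r) * fptDensity σ m z t := by
  rw [setIntegral_pos_iff_support_of_nonneg_ae ?pos (oneMf_integrableOn ha hb hr hσ hm hz)]
  case pos =>
    rw [EventuallyLE, ae_restrict_iff' measurableSet_Ioi]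
    filter_upwards with t ht
    have := M_lt_one ha hb hr (show (0:ℝ) < t from ht)
    have := (fpt_pos hσ hz m (show (0:ℝ) < t from ht)).le
    simp only [Pi.zero_apply]
    nlinarith
  have hsub : Ioi (0:ℝ) ⊆ Function.support (fun t => (1 - M a δ b t r) * fptDensity σ m z t)
      ∩ Ioi 0 := by
    intro t ht
    refine ⟨?_, ht⟩
    have h1 := M_lt_one ha hb hr (show (0:ℝ) < t from ht)
    have h2 := fpt_pos hσ hz m (show (0:ℝ) < t from ht)
    simp only [Function.mem_support]
    have : 0 < (1 - M a δ b t r) * fptDensity σ m z t := by nlinarith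
    exact this.ne'
  calc (0:ENNReal) < volume (Ioi (0:ℝ)) := by simp [Real.volume_Ioi]
    _ ≤ _ := measure_mono hsub

lemma cz_le_one {σ m z : ℝ} (hσ : 0 < σ) (hm : 0 ≤ m) (hz : 0 < z) :
    Real.exp (-(2*m*z/σ^2)) ≤ 1 := by
  rw [Real.exp_le_one_iff]
  have : 0 ≤ 2*m*z/σ^2 := by positivity
  linarith

/-- assuming `b̃ > 0`, `σ > 0`, `m ≥ 0`: for every `r ≥ 0` and `z > 0`,
`φ(r,z) < 1`; moreover `lim_{z→0⁺} φ(r,z) = 1` and `lim_{z→∞} φ(r,z) = 0`. -/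
theorem phiFun_properties (a δ b σ m : ℝ) (ha : 0 < a) (hδ : 0 < δ)
    (hb : 0 < b - δ^2/(2*a^2)) (hσ : 0 < σ) (hm : 0 ≤ m) :
    (∀ r ≥ (0:ℝ), ∀ z > (0:ℝ), phiFun a δ b σ m r z < 1) ∧
    (∀ r ≥ (0:ℝ),
      Tendsto (fun z => phiFun a δ b σ m r z) (nhdsWithin 0 (Set.Ioi 0)) (nhds 1)) ∧
    (∀ r ≥ (0:ℝ), Tendsto (fun z => phiFun a δ b σ m r z) atTop (nhds 0)) := by
  set c := b - δ^2/(2*a^2) with hcdef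
  refine ⟨?_, ?_, ?_⟩
  · -- φ < 1
    intro r hr z hz
    rw [phi_eq ha hb hr hσ hm hz]
    have hpos := oneMf_pos ha hb hr hσ hm hz
    have hce := cz_le_one hσ hm hz
    linarith
  · -- z → 0⁺
    intro r hr
    rw [Metric.tendsto_nhds]
    intro ε hε
    set L := c + |c - r| + δ^2/(4*a) with hLdef
    have hL0 : 0 < L := by
      have : 0 ≤ |c - r| := abs_nonneg _
      have : 0 < δ^2/(4*a) := by positivity
      simp only [hLdef]; linarith
    set s := min 1 (ε/(3*L)) with hsdef
    have hs0 : 0 < s := lt_min one_pos (by positivity)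
    have hs1 : s ≤ 1 := min_le_left _ _
    have hsL : L * s ≤ ε/3 := by
      calc L * s ≤ L * (ε/(3*L)) := mul_le_mul_of_nonneg_left (min_le_right _ _) hL0.le
        _ = ε/3 := by field_simp
    have hcz : Tendsto (fun z : ℝ => Real.exp (-(2*m*z/σ^2))) (nhdsWithin 0 (Ioi 0)) (nhds 1) := by
      have hcont : Continuous (fun z : ℝ => Real.exp (-(2*m*z/σ^2))) := by fun_prop
      have := (hcont.tendsto 0).mono_left (nhdsWithin_le_nhds (s := Ioi 0))
      simpa using this
    have h1 := Metric.tendsto_nhds.mp hcz (ε/3) (by linarith)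
    have h2 := Metric.tendsto_nhds.mp (Fcdf_tendsto_z_zero σ m s hσ hm hs0) (ε/3) (by linarith)
    filter_upwards [h1, h2, self_mem_nhdsWithin] with z hz1 hz2 hzmem
    have hz : 0 < z := hzmem
    have hce := cz_le_one hσ hm hz
    rw [Real.dist_eq] at hz1 hz2 ⊢
    rw [phi_eq ha hb hr hσ hm hz]
    set cz := Real.exp (-(2*m*z/σ^2)) with hczdef
    -- split J
    have hint1 := (oneMf_integrableOn ha hb hr hσ hm hz).mono_set
      (Ioc_subset_Ioi_self (b := (0:ℝ)) (a := s))
    have hint2 := (oneMf_integrableOn ha hb hr hσ hm hz).mono_set (Ioi_subset_Ioi hs0.le)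
    have hsplit : (∫ t in Ioi (0:ℝ), (1 - M a δ b t r) * fptDensity σ m z t)
        = (∫ t in Ioc 0 s, (1 - M a δ b t r) * fptDensity σ m z t)
          + ∫ t in Ioi s, (1 - M a δ b t r) * fptDensity σ m z t := by
      rw [← setIntegral_union (Ioc_disjoint_Ioi le_rfl) measurableSet_Ioi hint1 hint2,
        Ioc_union_Ioi_eq_Ioi hs0.le]
    have hFle : Fcdf σ m z s ≤ 1 := by
      rw [← fpt_integral_Ioc hσ hm hz hs0]
      calc (∫ t in Ioc 0 s, fptDensity σ m z t) ≤ ∫ t in Ioi (0:ℝ), fptDensity σ m z t := by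
            apply setIntegral_mono_set (fpt_integrableOn hσ hm hz)
            · rw [EventuallyLE, ae_restrict_iff' measurableSet_Ioi]
              filter_upwards with t ht
              exact (fpt_pos hσ hz m ht).le
            · exact HasSubset.Subset.eventuallyLE Ioc_subset_Ioi_self
        _ = cz := fpt_integral hσ hm hz
        _ ≤ 1 := hce
    have hJ1 : (∫ t in Ioc 0 s, (1 - M a δ b t r) * fptDensity σ m z t) ≤ L * s := by
      have hmono : (∫ t in Ioc 0 s, (1 - M a δ b t r) * fptDensity σ m z t)
          ≤ ∫ t in Ioc 0 s, (L*s) * fptDensity σ m z t := by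
        apply setIntegral_mono_on hint1
          (((fpt_integrableOn hσ hm hz).mono_set Ioc_subset_Ioi_self).const_mul (L*s))
          measurableSet_Ioc
        intro t ht
        have htpos : 0 < t := ht.1
        have h1M := one_sub_M_le ha hb hr htpos.le (ht.2.trans hs1)
        rw [← hcdef, ← hLdef] at h1M
        have hLt : L * t ≤ L * s := mul_le_mul_of_nonneg_left ht.2 hL0.le
        have hf := (fpt_pos hσ hz m htpos).le
        nlinarith
      rw [integral_const_mul, fpt_integral_Ioc hσ hm hz hs0] at hmono
      calc (∫ t in Ioc 0 s, (1 - M a δ b t r) * fptDensity σ m z t)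
          ≤ L * s * Fcdf σ m z s := hmono
        _ ≤ L * s * 1 := by
            apply mul_le_mul_of_nonneg_left hFle (by positivity)
        _ = L * s := mul_one _
    have hJ2 : (∫ t in Ioi s, (1 - M a δ b t r) * fptDensity σ m z t)
        ≤ cz - Fcdf σ m z s := by
      rw [← fpt_integral_Ioi hσ hm hz hs0]
      apply setIntegral_mono_on hint2 ((fpt_integrableOn hσ hm hz).mono_set (Ioi_subset_Ioi hs0.le))
        measurableSet_Ioi
      intro t ht
      have htpos : 0 < t := hs0.trans ht
      have hMpos := M_pos a δ b r t
      have hf := (fpt_pos hσ hz m htpos).le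
      nlinarith
    have hJ0 : 0 ≤ ∫ t in Ioi (0:ℝ), (1 - M a δ b t r) * fptDensity σ m z t :=
      (oneMf_pos ha hb hr hσ hm hz).le
    have hF2 : cz - Fcdf σ m z s < ε/3 := by
      have : 1 - Fcdf σ m z s < ε/3 := by
        have := abs_lt.mp hz2
        linarith [this.1]
      linarith
    have h1' : 1 - cz < ε/3 := by
      have := abs_lt.mp hz1
      linarith [this.1]
    have hJle : (∫ t in Ioi (0:ℝ), (1 - M a δ b t r) * fptDensity σ m z t)
        ≤ L * s + (cz - Fcdf σ m z s) := by
      rw [hsplit]; exact add_le_add hJ1 hJ2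
    set J := ∫ t in Ioi (0:ℝ), (1 - M a δ b t r) * fptDensity σ m z t with hJdef
    rw [abs_sub_comm, abs_of_nonneg (by linarith [hJ0, hce])]
    clear_value J cz s L c
    linarith [hJle, hsL, hF2, h1']
  · -- z → ∞
    intro r hr
    rw [NormedAddCommGroup.tendsto_nhds_zero]
    intro ε hε
    have hTlim : Tendsto (fun T : ℝ => Real.exp (c/a - c*T)) atTop (nhds 0) := by
      apply Real.tendsto_exp_atBot.comp
      have hbot : Tendsto (fun T : ℝ => (-c) * T) atTop atBot :=
        tendsto_id.const_mul_atTop_of_neg (by linarith)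
      have := tendsto_atBot_add_const_left atTop (c/a) hbot
      refine this.congr fun T => ?_
      ring
    obtain ⟨T, hTb, hT1⟩ : ∃ T : ℝ, Real.exp (c/a - c*T) < ε/2 ∧ 0 < T := by
      have := (hTlim.eventually_lt_const (by linarith : (0:ℝ) < ε/2)).and (eventually_gt_atTop 0)
      exact this.exists
    have hF0 := (Fcdf_tendsto_z_atTop σ m T hσ hm hT1).eventually_lt_const
      (by linarith : (0:ℝ) < ε/2)
    filter_upwards [hF0, eventually_gt_atTop 0] with z hz1 hz
    have hce := cz_le_one hσ hm hz
    set cz := Real.exp (-(2*m*z/σ^2)) with hczdef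
    have hint1 := (Mf_integrableOn ha hb hr hσ hm hz).mono_set
      (Ioc_subset_Ioi_self (b := (0:ℝ)) (a := T))
    have hint2 := (Mf_integrableOn ha hb hr hσ hm hz).mono_set (Ioi_subset_Ioi hT1.le)
    have hsplit : phiFun a δ b σ m r z
        = (∫ t in Ioc 0 T, M a δ b t r * fptDensity σ m z t)
          + ∫ t in Ioi T, M a δ b t r * fptDensity σ m z t := by
      rw [phiFun, ← setIntegral_union (Ioc_disjoint_Ioi le_rfl) measurableSet_Ioi hint1 hint2,
        Ioc_union_Ioi_eq_Ioi hT1.le]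
    have hpart1 : (∫ t in Ioc 0 T, M a δ b t r * fptDensity σ m z t) ≤ Fcdf σ m z T := by
      rw [← fpt_integral_Ioc hσ hm hz hT1]
      apply setIntegral_mono_on hint1 ((fpt_integrableOn hσ hm hz).mono_set Ioc_subset_Ioi_self)
        measurableSet_Ioc
      intro t ht
      have htpos : 0 < t := ht.1
      have hM1 := M_le_one ha hb hr htpos.le
      have hf := (fpt_pos hσ hz m htpos).le
      nlinarith
    have hFT0 : 0 ≤ Fcdf σ m z T := by
      rw [← fpt_integral_Ioc hσ hm hz hT1]
      exact setIntegral_nonneg measurableSet_Ioc fun t ht => (fpt_pos hσ hz m ht.1).le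
    have hpart2 : (∫ t in Ioi T, M a δ b t r * fptDensity σ m z t)
        ≤ Real.exp (c/a - c*T) := by
      have hmono : (∫ t in Ioi T, M a δ b t r * fptDensity σ m z t)
          ≤ ∫ t in Ioi T, Real.exp (c/a - c*T) * fptDensity σ m z t := by
        apply setIntegral_mono_on hint2
          (((fpt_integrableOn hσ hm hz).mono_set (Ioi_subset_Ioi hT1.le)).const_mul _)
          measurableSet_Ioi
        intro t ht
        have htpos : 0 < t := hT1.trans ht
        have hMd := M_le_decay ha hb hr htpos.le
        rw [← hcdef] at hMd
        have hdd : Real.exp (c/a - c*t) ≤ Real.exp (c/a - c*T) := by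
          rw [Real.exp_le_exp]
          exact sub_le_sub_left (mul_le_mul_of_nonneg_left (le_of_lt ht) hb.le) _
        have hf := (fpt_pos hσ hz m htpos).le
        nlinarith
      rw [integral_const_mul, fpt_integral_Ioi hσ hm hz hT1] at hmono
      calc (∫ t in Ioi T, M a δ b t r * fptDensity σ m z t)
          ≤ Real.exp (c/a - c*T) * (cz - Fcdf σ m z T) := hmono
        _ ≤ Real.exp (c/a - c*T) * 1 := by
            apply mul_le_mul_of_nonneg_left (by linarith) (Real.exp_pos _).le
        _ = _ := mul_one _
    have hphi0 : 0 ≤ phiFun a δ b σ m r z := by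
      rw [phiFun]
      apply setIntegral_nonneg measurableSet_Ioi
      intro t ht
      exact mul_nonneg (M_pos a δ b r t).le (fpt_pos hσ hz m ht).le
    rw [Real.norm_eq_abs, abs_of_nonneg hphi0]
    calc phiFun a δ b σ m r z ≤ Fcdf σ m z T + Real.exp (c/a - c*T) := by
          rw [hsplit]; exact add_le_add hpart1 hpart2
      _ < ε/2 + ε/2 := add_lt_add hz1 hTb
      _ = ε := by ring
end
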